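/- arXiv:1206.4939 — 4 statements merged into one kernel-verified Lean document; each statement's English description precedes it below -/
import Mathlib

section
/- Let (Ω, ℱ, P) be a probability space, let p ∈ [0,1], let (𝔉_k)_{k∈ℕ} be a sequence of sub-σ-algebras of ℱ, and let (U_k)_{k∈ℕ} be a sequence of ℱ-measurable events. Assume: (i) for every k ∈ ℕ, the event ⋂_{i<k} U_iᶜ is measurable with respect to 𝔉_k; and (ii) for every k ∈ ℕ, P-almost surely E[1_{U_kᶜ} | 𝔉_k] ≤ 1 − p. Then for every k ∈ ℕ, P( ⋂_{i<k} U_iᶜ ) ≤ (1 − p)^k. -/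
open MeasureTheory

/-! Conditioning on the `F k`-measurable survival event `A k = ⋂_{i<k} (U i)ᶜ` gives
`P (A (k+1)) = ∫_{A k} P[1_{(U k)ᶜ} | F k] dP ≤ (1 - p) P (A k)`, and iterating yields `(1 - p)^k`. -/

theorem measureReal_inter_le_of_condExp_indicator_le {Ω : Type*} {m mΩ : MeasurableSpace Ω}
    {μ : Measure Ω} [IsFiniteMeasure μ] (hm : m ≤ mΩ) {A B : Set Ω} (hA : MeasurableSet[m] A)
    (hB : MeasurableSet B) {c : ℝ} (hc : ∀ᵐ ω ∂μ, μ[B.indicator 1 | m] ω ≤ c) :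
    μ.real (A ∩ B) ≤ c * μ.real A := by
  have hint : Integrable (B.indicator (1 : Ω → ℝ)) μ :=
    (integrable_const (1 : ℝ)).indicator hB
  calc μ.real (A ∩ B) = ∫ ω in A, B.indicator 1 ω ∂μ := by
        rw [integral_indicator_one hB, measureReal_restrict_apply hB, Set.inter_comm]
    _ = ∫ ω in A, μ[B.indicator 1 | m] ω ∂μ := (setIntegral_condExp hm hint hA).symm
    _ ≤ ∫ _ in A, c ∂μ :=
        integral_mono_ae integrable_condExp.restrict (integrable_const c) (ae_restrict_of_ae hc)
    _ = c * μ.real A := by rw [setIntegral_const, smul_eq_mul, mul_comm]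

theorem geometric_decay_of_conditional_bound_general
    {Ω : Type*} {mΩ : MeasurableSpace Ω} (P : Measure Ω) [IsProbabilityMeasure P]
    (p : ℝ) (hp1 : p ≤ 1)
    (F : ℕ → MeasurableSpace Ω) (hF : ∀ k, F k ≤ mΩ)
    (U : ℕ → Set Ω) (hU : ∀ k, MeasurableSet (U k))
    (hadapt : ∀ k, MeasurableSet[F k] (⋂ i ∈ Finset.range k, (U i)ᶜ))
    (hcond : ∀ k, ∀ᵐ ω ∂P,
      (P[Set.indicator ((U k)ᶜ) (fun _ => (1 : ℝ)) | F k]) ω ≤ 1 - p) :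
    ∀ k : ℕ, P (⋂ i ∈ Finset.range k, (U i)ᶜ) ≤ ENNReal.ofReal ((1 - p) ^ k) := by
  intro n
  have hp : 0 ≤ 1 - p := sub_nonneg.mpr hp1
  have hstep : ∀ k, P.real (⋂ i ∈ Finset.range (k + 1), (U i)ᶜ)
      ≤ (1 - p) * P.real (⋂ i ∈ Finset.range k, (U i)ᶜ) := fun k => by
    rw [Finset.range_add_one, Finset.set_biInter_insert, Set.inter_comm]
    exact measureReal_inter_le_of_condExp_indicator_le (hF k) (hadapt k) (hU k).compl (hcond k)
  have hgeom := le_geom (u := fun k => P.real (⋂ i ∈ Finset.range k, (U i)ᶜ)) hp n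
    fun k _ => hstep k
  rw [ENNReal.le_ofReal_iff_toReal_le (measure_ne_top _ _) (pow_nonneg hp n),
    ← measureReal_def]
  simpa using hgeom

/-- Quantitative core of the Inevitability Theorem: if at each step `k` the
conditional probability of `U k` failing, given `𝔉 k`, is at most `1 - p`,
and the event that the first `k` events all fail is `𝔉 k`-measurable,
then the probability that none of the first `k` events occurs decays
geometrically. -/
theorem geometric_decay_of_conditional_bound
    {Ω : Type*} {mΩ : MeasurableSpace Ω} (P : Measure Ω) [IsProbabilityMeasure P]
    (p : ℝ) (hp0 : 0 ≤ p) (hp1 : p ≤ 1)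
    (F : ℕ → MeasurableSpace Ω) (hF : ∀ k, F k ≤ mΩ)
    (U : ℕ → Set Ω) (hU : ∀ k, MeasurableSet (U k))
    (hadapt : ∀ k, MeasurableSet[F k] (⋂ i ∈ Finset.range k, (U i)ᶜ))
    (hcond : ∀ k, ∀ᵐ ω ∂P,
      (P[Set.indicator ((U k)ᶜ) (fun _ => (1 : ℝ)) | F k]) ω ≤ 1 - p) :
    ∀ k : ℕ, P (⋂ i ∈ Finset.range k, (U i)ᶜ) ≤ ENNReal.ofReal ((1 - p) ^ k) :=
  geometric_decay_of_conditional_bound_general P p hp1 F hF U hU hadapt hcond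
end

section
/- Let θ ∈ [0, π/2), and let x = (x₁, x₂) and y = (y₁, y₂) be points of the Euclidean plane ℝ² (with the Euclidean norm |·|). Suppose y₁ ≤ 0 and |y₂| ≤ −tan(θ)·y₁ (i.e., y lies in the hinterland cone of aperture θ), and suppose |x − y| ≤ |y| (i.e., x lies in the closed Euclidean ball of radius |y| centered at y). Then x₁ ≤ tan(θ)·|x₂|. -/
open Real

/-- Plane geometry estimate: if `y` lies in the hinterland cone of aperture
`θ` and `x` lies in the closed ball of radius `|y|` centered at `y`, then
`x₁ ≤ tan θ · |x₂|`. -/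
theorem hinterland_ball_estimate
    (θ : ℝ) (hθ : θ ∈ Set.Ico 0 (π / 2))
    (x y : EuclideanSpace ℝ (Fin 2))
    (hy1 : y 0 ≤ 0) (hy2 : |y 1| ≤ -Real.tan θ * y 0)
    (hx : ‖x - y‖ ≤ ‖y‖) :
    x 0 ≤ Real.tan θ * |x 1| := by
  have t0 : 0 ≤ Real.tan θ := Real.tan_nonneg_of_nonneg_of_le_pi_div_two hθ.1 (le_of_lt hθ.2)
  have hsq : ‖x - y‖ ^ 2 ≤ ‖y‖ ^ 2 := by
    have := norm_nonneg (x - y)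
    nlinarith [norm_nonneg y]
  have h : (x 0 - y 0) ^ 2 + (x 1 - y 1) ^ 2 ≤ (y 0) ^ 2 + (y 1) ^ 2 := by
    have e1 : ‖x - y‖ ^ 2 = (x 0 - y 0) ^ 2 + (x 1 - y 1) ^ 2 := by
      rw [EuclideanSpace.norm_eq]
      rw [Real.sq_sqrt (by positivity)]
      simp [Fin.sum_univ_two, sq_abs]
    have e2 : ‖y‖ ^ 2 = (y 0) ^ 2 + (y 1) ^ 2 := by
      rw [EuclideanSpace.norm_eq]
      rw [Real.sq_sqrt (by positivity)]
      simp [Fin.sum_univ_two, sq_abs]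
    linarith [e1 ▸ e2 ▸ hsq]
  have hxy : x 1 * y 1 ≤ |x 1| * (-Real.tan θ * y 0) := by
    calc x 1 * y 1 ≤ |x 1 * y 1| := le_abs_self _
      _ = |x 1| * |y 1| := abs_mul _ _
      _ ≤ |x 1| * (-Real.tan θ * y 0) :=
        mul_le_mul_of_nonneg_left hy2 (abs_nonneg _)
  by_contra hc
  push_neg at hc
  have ha : 0 ≤ |x 1| := abs_nonneg _
  have hx0 : 0 < x 0 := lt_of_le_of_lt (by positivity) hc
  nlinarith [sq_abs (x 1), mul_nonneg (neg_nonneg.mpr hy1) (le_of_lt (sub_pos.mpr hc)),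
    mul_pos hx0 hx0]
end

section
/- Let δ ∈ (0,1], let Q ⊆ ℝ be a Lebesgue-measurable set, and suppose there exists r₀ ≥ 0 such that for every r ≥ r₀, the Lebesgue measure of Q ∩ [0, r] is at least δ·r. Define R : ℕ → ℝ recursively by R(0) = 0 and R(k+1) = inf( Q ∩ [R(k)+1, ∞) ). Then: (a) for every k, the set Q ∩ [R(k)+1, ∞) is nonempty (so the recursion is well defined); (b) for every k, R(k) ≥ k; and (c) with C = 1/δ + 1, one has R(k) ≤ C·k for all but finitely many k. -/
open MeasureTheory Filter ENNReal

/-- Deterministic content of the frontier-radii corollary: if `Q ⊆ ℝ` has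
`Leb(Q ∩ [0,r]) ≥ δ·r` for all `r ≥ r₀`, then the recursion
`R 0 = 0`, `R (k+1) = inf (Q ∩ [R k + 1, ∞))` is well defined
(the sets are nonempty), `R k ≥ k`, and `R k ≤ (1/δ + 1)·k` for all but
finitely many `k`. -/
theorem frontier_radii_well_defined
    (δ : ℝ) (hδ : δ ∈ Set.Ioc (0 : ℝ) 1)
    (Q : Set ℝ) (hQ : MeasurableSet Q)
    (r₀ : ℝ) (hr₀ : 0 ≤ r₀)
    (hdens : ∀ r ≥ r₀, ENNReal.ofReal (δ * r) ≤ volume (Q ∩ Set.Icc 0 r))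
    (R : ℕ → ℝ) (hR0 : R 0 = 0)
    (hRrec : ∀ k : ℕ, R (k + 1) = sInf (Q ∩ Set.Ici (R k + 1))) :
    (∀ k : ℕ, (Q ∩ Set.Ici (R k + 1)).Nonempty) ∧
      (∀ k : ℕ, (k : ℝ) ≤ R k) ∧
      (∀ᶠ k : ℕ in atTop, R k ≤ (1 / δ + 1) * k) := by
  obtain ⟨hδ0, hδ1⟩ := hδ
  -- (a) nonemptiness for any nonnegative left endpoint
  have hne : ∀ a : ℝ, 0 ≤ a → (Q ∩ Set.Ici (a + 1)).Nonempty := by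
    intro a ha
    by_contra h
    rw [Set.not_nonempty_iff_eq_empty] at h
    set r := max r₀ ((a + 2) / δ) with hr_def
    have hrr₀ : r₀ ≤ r := le_max_left _ _
    have h1 := hdens r hrr₀
    have hsub : Q ∩ Set.Icc 0 r ⊆ Set.Icc 0 (a + 1) := by
      rintro x ⟨hxQ, hx0, hxr⟩
      refine ⟨hx0, ?_⟩
      by_contra hc
      push_neg at hc
      have : x ∈ Q ∩ Set.Ici (a + 1) := ⟨hxQ, le_of_lt hc⟩
      rw [h] at this
      exact this
    have h2 : volume (Q ∩ Set.Icc 0 r) ≤ ENNReal.ofReal (a + 1) := by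
      calc volume (Q ∩ Set.Icc 0 r) ≤ volume (Set.Icc 0 (a + 1)) :=
            measure_mono hsub
        _ = ENNReal.ofReal (a + 1) := by rw [Real.volume_Icc]; ring_nf
    have hδr : a + 2 ≤ δ * r := by
      have : δ * ((a + 2) / δ) = a + 2 := by field_simp
      calc a + 2 = δ * ((a + 2) / δ) := this.symm
        _ ≤ δ * r := by
            apply mul_le_mul_of_nonneg_left (le_max_right _ _) hδ0.le
    have hlt : ENNReal.ofReal (a + 1) < ENNReal.ofReal (δ * r) := by
      apply ENNReal.ofReal_lt_ofReal_iff_of_nonneg (by linarith) |>.mpr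
      linarith
    exact absurd (h1.trans h2) (not_le.mpr hlt)
  -- (b) R k ≥ k, by induction
  have hge : ∀ k : ℕ, (k : ℝ) ≤ R k := by
    intro k
    induction k with
    | zero => simp [hR0]
    | succ k ih =>
      have h0 : (0 : ℝ) ≤ R k := le_trans (Nat.cast_nonneg k) ih
      have hnek := hne (R k) h0
      have hbdd : ∀ x ∈ Q ∩ Set.Ici (R k + 1), R k + 1 ≤ x := fun x hx => hx.2
      have : R k + 1 ≤ R (k + 1) := by
        rw [hRrec k]
        exact le_csInf hnek hbdd
      push_cast
      linarith
  have hRnonneg : ∀ k : ℕ, (0 : ℝ) ≤ R k := fun k =>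
    le_trans (Nat.cast_nonneg k) (hge k)
  have hnonempty : ∀ k : ℕ, (Q ∩ Set.Ici (R k + 1)).Nonempty := fun k =>
    hne (R k) (hRnonneg k)
  refine ⟨hnonempty, hge, ?_⟩
  -- covering lemma
  have hcover : ∀ k : ℕ, Q ∩ Set.Icc 0 (R k) ⊆
      (⋃ j ∈ Finset.range k, Set.Icc (R j) (R j + 1)) ∪ {R k} := by
    intro k
    induction k with
    | zero =>
      rintro x ⟨hxQ, hx0, hxR⟩
      right
      rw [hR0] at hxR ⊢
      exact le_antisymm hxR hx0
    | succ k ih =>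
      rintro x ⟨hxQ, hx0, hxR⟩
      by_cases hle : x ≤ R k
      · have := ih ⟨hxQ, hx0, hle⟩
        rcases this with h | h
        · left
          simp only [Set.mem_iUnion, Finset.mem_range] at h ⊢
          obtain ⟨j, hj, hx⟩ := h
          exact ⟨j, Nat.lt_succ_of_lt hj, hx⟩
        · left
          simp only [Set.mem_singleton_iff] at h
          simp only [Set.mem_iUnion, Finset.mem_range]
          exact ⟨k, Nat.lt_succ_self k, by rw [h]; constructor <;> linarith⟩
      · push_neg at hle
        by_cases hle1 : x ≤ R k + 1
        · left
          simp only [Set.mem_iUnion, Finset.mem_range]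
          exact ⟨k, Nat.lt_succ_self k, hle.le, hle1⟩
        · push_neg at hle1
          right
          have hmem : x ∈ Q ∩ Set.Ici (R k + 1) := ⟨hxQ, hle1.le⟩
          have hbdd : BddBelow (Q ∩ Set.Ici (R k + 1)) :=
            ⟨R k + 1, fun y hy => hy.2⟩
          have hinf : R (k + 1) ≤ x := by
            rw [hRrec k]; exact csInf_le hbdd hmem
          exact Set.mem_singleton_iff.mpr (le_antisymm hxR hinf)
  -- measure bound: volume (Q ∩ [0, R k]) ≤ k
  have hmeas : ∀ k : ℕ, volume (Q ∩ Set.Icc 0 (R k)) ≤ (k : ℝ≥0∞) := by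
    intro k
    calc volume (Q ∩ Set.Icc 0 (R k))
        ≤ volume ((⋃ j ∈ Finset.range k, Set.Icc (R j) (R j + 1)) ∪ {R k}) :=
          measure_mono (hcover k)
      _ ≤ volume (⋃ j ∈ Finset.range k, Set.Icc (R j) (R j + 1))
            + volume ({R k} : Set ℝ) := measure_union_le _ _
      _ = volume (⋃ j ∈ Finset.range k, Set.Icc (R j) (R j + 1)) := by
          rw [Real.volume_singleton, add_zero]
      _ ≤ ∑ j ∈ Finset.range k, volume (Set.Icc (R j) (R j + 1)) :=
          measure_biUnion_finset_le _ _
      _ = ∑ j ∈ Finset.range k, 1 := by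
          apply Finset.sum_congr rfl
          intro j _
          rw [Real.volume_Icc]
          simp
      _ = (k : ℝ≥0∞) := by simp
  -- conclusion
  rw [eventually_atTop]
  refine ⟨max 1 ⌈r₀⌉₊, fun k hk => ?_⟩
  have hk1 : 1 ≤ k := le_trans (le_max_left _ _) hk
  have hkr₀ : r₀ ≤ (k : ℝ) := by
    calc r₀ ≤ (⌈r₀⌉₊ : ℝ) := Nat.le_ceil r₀
      _ ≤ (k : ℝ) := by
          exact_mod_cast le_trans (le_max_right 1 ⌈r₀⌉₊) hk
  have hRr₀ : r₀ ≤ R k := le_trans hkr₀ (hge k)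
  have h1 := hdens (R k) hRr₀
  have h2 : ENNReal.ofReal (δ * R k) ≤ ENNReal.ofReal (k : ℝ) := by
    calc ENNReal.ofReal (δ * R k) ≤ volume (Q ∩ Set.Icc 0 (R k)) := h1
      _ ≤ (k : ℝ≥0∞) := hmeas k
      _ = ENNReal.ofReal (k : ℝ) := by simp
  have h3 : δ * R k ≤ (k : ℝ) :=
    (ENNReal.ofReal_le_ofReal_iff (Nat.cast_nonneg k)).mp h2
  have h4 : R k ≤ (k : ℝ) / δ := (le_div_iff₀' hδ0).mpr h3
  have hk0 : (0 : ℝ) ≤ (k : ℝ) := Nat.cast_nonneg k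
  calc R k ≤ (k : ℝ) / δ := h4
    _ = (1 / δ) * k := by ring
    _ ≤ (1 / δ + 1) * k := by nlinarith
end

section
/- Let τ > 0, M ≥ 0, and c ∈ ℝ. There exists a constant C ≥ 0 (depending only on τ, M, c) with the following property: for all continuous functions K₁, K₂ : ℝ → ℝ satisfying |K_i(t)| ≤ M for every t ∈ [0, τ] (i = 1, 2), and all functions j₁, j₂, j₁', j₂' : ℝ → ℝ such that for every t ∈ [0, τ] and i = 1, 2, j_i has derivative j_i'(t) at t and j_i' has derivative −K_i(t)·j_i(t) at t, with initial conditions j₁(0) = j₂(0) = 0 and j₁'(0) = j₂'(0) = c, one has sup_{t ∈ [0,τ]} | j₁(t) − j₂(t) | ≤ C · sup_{t ∈ [0,τ]} | K₁(t) − K₂(t) |. -/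
/-!
The phase vector `(j, j')` solves the first-order system `(j, j')' = (j', -K j + e)`, whose
right-hand side is `L`-Lipschitz in the sup norm on `ℝ × ℝ` for `L = max 1 M`, so Grönwall's
inequality controls it. Applied to `j₂` (with `e = 0`) it bounds `|j₂| ≤ |c| e^{Lτ}`. The difference
`j₁ - j₂` solves the same system for `K = K₁` with forcing `e = -(K₁ - K₂) j₂`, which is at most
`S |c| e^{Lτ}` with `S = sup |K₁ - K₂|`; since its initial phase vanishes, Grönwall bounds it by a
multiple of `S`.
-/

open Set Real

theorem gronwallBound_δ0_mul (K a ε x : ℝ) :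
    gronwallBound 0 K (a * ε) x = a * gronwallBound 0 K ε x := by
  unfold gronwallBound
  split_ifs <;> ring

theorem norm_jacobi_rhs_le {k e x y L : ℝ} (hL : 1 ≤ L) (hk : |k| ≤ L) :
    ‖(y, -k * x + e)‖ ≤ L * ‖(x, y)‖ + |e| := by
  have hx : |x| ≤ ‖(x, y)‖ := norm_fst_le (x, y)
  have hy : |y| ≤ ‖(x, y)‖ := norm_snd_le (x, y)
  refine max_le ?_ ?_
  · change |y| ≤ _
    nlinarith [abs_nonneg e, abs_nonneg y]
  · calc |-k * x + e| ≤ |k| * |x| + |e| := by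
          simpa only [abs_mul, abs_neg] using abs_add_le (-k * x) e
      _ ≤ L * ‖(x, y)‖ + |e| := by gcongr

section Jacobi

variable {j j' K : ℝ → ℝ} {a b L : ℝ}

theorem norm_le_gronwallBound_of_jacobi {e : ℝ → ℝ} {ε : ℝ} (hL : 1 ≤ L)
    (hK : ∀ t ∈ Ico a b, |K t| ≤ L) (he : ∀ t ∈ Ico a b, |e t| ≤ ε)
    (hj : ∀ t ∈ Icc a b, HasDerivAt j (j' t) t ∧ HasDerivAt j' (-K t * j t + e t) t) :
    ∀ t ∈ Icc a b, ‖(j t, j' t)‖ ≤ gronwallBound ‖(j a, j' a)‖ L ε (t - a) := by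
  have hphase : ∀ t ∈ Icc a b,
      HasDerivAt (fun s => (j s, j' s)) (j' t, -K t * j t + e t) t :=
    fun t ht => (hj t ht).1.prodMk (hj t ht).2
  refine norm_le_gronwallBound_of_norm_deriv_right_le
    (fun t ht => (hphase t ht).continuousAt.continuousWithinAt)
    (fun t ht => (hphase t (Ico_subset_Icc_self ht)).hasDerivWithinAt) le_rfl
    fun t ht => ?_
  calc ‖(j' t, -K t * j t + e t)‖ ≤ L * ‖(j t, j' t)‖ + |e t| :=
        norm_jacobi_rhs_le hL (hK t ht)
    _ ≤ L * ‖(j t, j' t)‖ + ε := by gcongr; exact he t ht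

theorem norm_le_mul_exp_of_jacobi (hL : 1 ≤ L) (hK : ∀ t ∈ Ico a b, |K t| ≤ L)
    (hj : ∀ t ∈ Icc a b, HasDerivAt j (j' t) t ∧ HasDerivAt j' (-K t * j t) t) :
    ∀ t ∈ Icc a b, ‖(j t, j' t)‖ ≤ ‖(j a, j' a)‖ * exp (L * (t - a)) := by
  intro t ht
  rw [← gronwallBound_ε0]
  refine norm_le_gronwallBound_of_jacobi (e := 0) hL hK (fun _ _ => abs_zero.le) ?_ t ht
  simpa only [Pi.zero_apply, add_zero] using hj

theorem norm_sub_le_gronwallBound_of_jacobi {K₁ K₂ j₁ j₂ j₁' j₂' : ℝ → ℝ} {S B : ℝ}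
    (hL : 1 ≤ L) (hK₁ : ∀ t ∈ Ico a b, |K₁ t| ≤ L)
    (hK : ∀ t ∈ Ico a b, |K₁ t - K₂ t| ≤ S) (hj₂B : ∀ t ∈ Ico a b, |j₂ t| ≤ B)
    (hj₁ : ∀ t ∈ Icc a b, HasDerivAt j₁ (j₁' t) t ∧ HasDerivAt j₁' (-K₁ t * j₁ t) t)
    (hj₂ : ∀ t ∈ Icc a b, HasDerivAt j₂ (j₂' t) t ∧ HasDerivAt j₂' (-K₂ t * j₂ t) t) :
    ∀ t ∈ Icc a b, ‖(j₁ t - j₂ t, j₁' t - j₂' t)‖ ≤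
      gronwallBound ‖(j₁ a - j₂ a, j₁' a - j₂' a)‖ L (S * B) (t - a) := by
  refine norm_le_gronwallBound_of_jacobi (j := j₁ - j₂) (j' := j₁' - j₂')
    (e := fun t => -(K₁ t - K₂ t) * j₂ t) hL hK₁ (fun t ht => ?_) (fun t ht => ?_)
  · rw [abs_mul, abs_neg]
    exact mul_le_mul (hK t ht) (hj₂B t ht) (abs_nonneg _) ((abs_nonneg _).trans (hK t ht))
  · refine ⟨(hj₁ t ht).1.sub (hj₂ t ht).1, ((hj₁ t ht).2.sub (hj₂ t ht).2).congr_deriv ?_⟩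
    simp only [Pi.sub_apply]
    ring

end Jacobi

theorem jacobi_continuous_dependence_on_curvature_general
    (τ M : ℝ) (hτ : 0 < τ) (c : ℝ) :
    ∃ C : ℝ, 0 ≤ C ∧
      ∀ K₁ K₂ : ℝ → ℝ, Continuous K₁ → Continuous K₂ →
      (∀ t ∈ Set.Icc (0 : ℝ) τ, |K₁ t| ≤ M) →
      (∀ t ∈ Set.Icc (0 : ℝ) τ, |K₂ t| ≤ M) →
      ∀ j₁ j₂ j₁' j₂' : ℝ → ℝ,
      (∀ t ∈ Set.Icc (0 : ℝ) τ,
        HasDerivAt j₁ (j₁' t) t ∧ HasDerivAt j₁' (-(K₁ t) * j₁ t) t) →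
      (∀ t ∈ Set.Icc (0 : ℝ) τ,
        HasDerivAt j₂ (j₂' t) t ∧ HasDerivAt j₂' (-(K₂ t) * j₂ t) t) →
      j₁ 0 = 0 → j₂ 0 = 0 → j₁' 0 = c → j₂' 0 = c →
      ∀ t ∈ Set.Icc (0 : ℝ) τ,
        |j₁ t - j₂ t| ≤
          C * sSup ((fun s => |K₁ s - K₂ s|) '' Set.Icc (0 : ℝ) τ) := by
  set L := max 1 M
  have hL : 1 ≤ L := le_max_left 1 M
  set B := |c| * exp (L * τ)
  have hmono : Monotone (gronwallBound 0 L B) :=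
    gronwallBound_mono le_rfl (by positivity) (by positivity)
  refine ⟨gronwallBound 0 L B τ, by simpa only [gronwallBound_x0] using hmono hτ.le, ?_⟩
  intro K₁ K₂ hK₁ hK₂ hK₁M hK₂M j₁ j₂ j₁' j₂' hj₁ hj₂ hj₁0 hj₂0 hj₁'0 hj₂'0 t ht
  set S := sSup ((fun s => |K₁ s - K₂ s|) '' Icc 0 τ)
  have hS : ∀ s ∈ Icc 0 τ, |K₁ s - K₂ s| ≤ S := fun s hs =>
    ContinuousOn.le_sSup_image_Icc (f := fun s => |K₁ s - K₂ s|) (by fun_prop) hs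
  have hKL : ∀ K : ℝ → ℝ, (∀ s ∈ Icc 0 τ, |K s| ≤ M) → ∀ s ∈ Ico 0 τ, |K s| ≤ L :=
    fun K hK s hs => (hK s (Ico_subset_Icc_self hs)).trans (le_max_right 1 M)
  have hj₂B : ∀ s ∈ Icc 0 τ, |j₂ s| ≤ B := fun s hs => calc
    |j₂ s| ≤ ‖(j₂ s, j₂' s)‖ := norm_fst_le (j₂ s, j₂' s)
    _ ≤ |c| * exp (L * s) := by
      simpa [hj₂0, hj₂'0] using norm_le_mul_exp_of_jacobi hL (hKL K₂ hK₂M) hj₂ s hs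
    _ ≤ |c| * exp (L * τ) := by gcongr; exact hs.2
  have hdiff := norm_sub_le_gronwallBound_of_jacobi hL (hKL K₁ hK₁M)
    (fun s hs => hS s (Ico_subset_Icc_self hs)) (fun s hs => hj₂B s (Ico_subset_Icc_self hs))
    hj₁ hj₂ t ht
  calc |j₁ t - j₂ t| ≤ ‖(j₁ t - j₂ t, j₁' t - j₂' t)‖ := norm_fst_le (j₁ t - j₂ t, j₁' t - j₂' t)
    _ ≤ S * gronwallBound 0 L B t := by
      simpa [hj₁0, hj₂0, hj₁'0, hj₂'0, gronwallBound_δ0_mul] using hdiff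
    _ ≤ S * gronwallBound 0 L B τ := by
      gcongr
      exacts [(abs_nonneg _).trans (hS t ht), hmono ht.2]
    _ = gronwallBound 0 L B τ * S := mul_comm _ _

/-- Lipschitz continuous dependence of Jacobi fields on the curvature
coefficient: there is a constant `C = C(τ, M, c)` such that any two solutions
of `j'' + K_i j = 0` on `[0, τ]` with the same initial conditions
`j(0) = 0`, `j'(0) = c`, and curvature profiles bounded by `M`, satisfy
`sup_{[0,τ]} |j₁ - j₂| ≤ C · sup_{[0,τ]} |K₁ - K₂|`. -/
theorem jacobi_continuous_dependence_on_curvature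
    (τ M : ℝ) (hτ : 0 < τ) (hM : 0 ≤ M) (c : ℝ) :
    ∃ C : ℝ, 0 ≤ C ∧
      ∀ K₁ K₂ : ℝ → ℝ, Continuous K₁ → Continuous K₂ →
      (∀ t ∈ Set.Icc (0 : ℝ) τ, |K₁ t| ≤ M) →
      (∀ t ∈ Set.Icc (0 : ℝ) τ, |K₂ t| ≤ M) →
      ∀ j₁ j₂ j₁' j₂' : ℝ → ℝ,
      (∀ t ∈ Set.Icc (0 : ℝ) τ,
        HasDerivAt j₁ (j₁' t) t ∧ HasDerivAt j₁' (-(K₁ t) * j₁ t) t) →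
      (∀ t ∈ Set.Icc (0 : ℝ) τ,
        HasDerivAt j₂ (j₂' t) t ∧ HasDerivAt j₂' (-(K₂ t) * j₂ t) t) →
      j₁ 0 = 0 → j₂ 0 = 0 → j₁' 0 = c → j₂' 0 = c →
      ∀ t ∈ Set.Icc (0 : ℝ) τ,
        |j₁ t - j₂ t| ≤
          C * sSup ((fun s => |K₁ s - K₂ s|) '' Set.Icc (0 : ℝ) τ) :=
  jacobi_continuous_dependence_on_curvature_general τ M hτ c
end
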